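/- arXiv:1906.10982 — 7 statements merged into one kernel-verified Lean document; each statement's English description precedes it below -/
import Mathlib

section
/- Let X = {x₀ < x₁ < … < x_p} and Y = {y₀ < y₁ < … < y_q} be finite sets of reals, and let g = [x_i, x_{i+1}]×[y_j, y_{j+1}] be a grid cell (formed by consecutive elements of X and of Y). Let R = (a,b)×(c,d) be an axis-parallel open rectangle such that (a,b) contains some element of X, (c,d) contains some element of Y, and R ∩ g ≠ ∅. Then R contains a corner of g, i.e., some point (u,v) with u ∈ {x_i, x_{i+1}} and v ∈ {y_j, y_{j+1}} lies in R. -/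
open Set

theorem exists_endpoint_mem_Ioo_of_gap {α : Type*} [LinearOrder α] {S : Set α} {s t a b : α}
    (hgap : ∀ x ∈ S, ¬(s < x ∧ x < t)) (hS : ∃ x ∈ S, a < x ∧ x < b)
    (hmeet : (Ioo a b ∩ Icc s t).Nonempty) :
    ∃ u ∈ ({s, t} : Set α), u ∈ Ioo a b := by
  obtain ⟨p, ⟨hap, hpb⟩, hsp, hpt⟩ := hmeet
  obtain ⟨x, hxS, hax, hxb⟩ := hS
  by_contra! hout
  have hsa : s ≤ a := not_lt.mp fun has => hout s (.inl rfl) ⟨has, hsp.trans_lt hpb⟩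
  have hbt : b ≤ t := not_lt.mp fun htb => hout t (.inr rfl) ⟨hap.trans_le hpt, htb⟩
  exact hgap x hxS ⟨hsa.trans_lt hax, hxb.trans_le hbt⟩

theorem stmt_1_general (X Y : Finset ℝ) (xi xi1 yj yj1 a b c d : ℝ)
    (hxcons : ∀ x ∈ X, ¬(xi < x ∧ x < xi1))
    (hycons : ∀ y ∈ Y, ¬(yj < y ∧ y < yj1))
    (hX : ∃ x ∈ X, a < x ∧ x < b) (hY : ∃ y ∈ Y, c < y ∧ y < d)
    (hint : ((Set.Ioo a b ×ˢ Set.Ioo c d) ∩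
      (Set.Icc xi xi1 ×ˢ Set.Icc yj yj1)).Nonempty) :
    ∃ u ∈ ({xi, xi1} : Set ℝ), ∃ v ∈ ({yj, yj1} : Set ℝ),
      (u, v) ∈ Set.Ioo a b ×ˢ Set.Ioo c d := by
  obtain ⟨p, ⟨hpx, hpy⟩, hqx, hqy⟩ := hint
  obtain ⟨u, hu, hua⟩ := exists_endpoint_mem_Ioo_of_gap (S := X) hxcons hX ⟨p.1, hpx, hqx⟩
  obtain ⟨v, hv, hvc⟩ := exists_endpoint_mem_Ioo_of_gap (S := Y) hycons hY ⟨p.2, hpy, hqy⟩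
  exact ⟨u, hu, v, hv, hua, hvc⟩

/-- If an open rectangle `(a,b)×(c,d)` contains a grid `x`-coordinate and a
grid `y`-coordinate, and it intersects the grid cell `[xi,xi1]×[yj,yj1]` formed by
consecutive grid coordinates, then it contains a corner of that cell. -/
theorem stmt_1 (X Y : Finset ℝ) (xi xi1 yj yj1 a b c d : ℝ)
    (hxiX : xi ∈ X) (hxi1X : xi1 ∈ X) (hxlt : xi < xi1)
    (hxcons : ∀ x ∈ X, ¬(xi < x ∧ x < xi1))
    (hyjY : yj ∈ Y) (hyj1Y : yj1 ∈ Y) (hylt : yj < yj1)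
    (hycons : ∀ y ∈ Y, ¬(yj < y ∧ y < yj1))
    (hab : a < b) (hcd : c < d)
    (hX : ∃ x ∈ X, a < x ∧ x < b) (hY : ∃ y ∈ Y, c < y ∧ y < d)
    (hint : ((Set.Ioo a b ×ˢ Set.Ioo c d) ∩
      (Set.Icc xi xi1 ×ˢ Set.Icc yj yj1)).Nonempty) :
    ∃ u ∈ ({xi, xi1} : Set ℝ), ∃ v ∈ ({yj, yj1} : Set ℝ),
      (u, v) ∈ Set.Ioo a b ×ˢ Set.Ioo c d :=
  stmt_1_general X Y xi xi1 yj yj1 a b c d hxcons hycons hX hY hint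
end

section
/- Let ε > 0, let k ≥ 2 be an integer, let N > 0 be real, let OPT be a finite set and h : OPT → ℝ with h(i) > 0 for all i. For each positive integer B define I(B) := {i ∈ OPT : (1/k)^{B+2}·N ≤ h(i) < (1/k)^B·N}. Then there exists B ∈ {1, …, ⌈8/ε⌉} such that |I(B)| ≤ (ε/2)·|OPT|. -/
/-- Shifting argument. For `ε > 0`, `k ≥ 2`, `N > 0` and a finite set `OPT`
with positive values `h`, there is a class index `B ∈ {1,…,⌈8/ε⌉}` such that the number of
elements of `OPT` whose value lies in `[(1/k)^{B+2}·N, (1/k)^B·N)` is at most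
`(ε/2)·|OPT|`. -/
theorem stmt_4 {ι : Type} (ε : ℝ) (hε : 0 < ε) (k : ℕ) (hk : 2 ≤ k)
    (N : ℝ) (hN : 0 < N) (OPT : Finset ι) (h : ι → ℝ)
    (hpos : ∀ i ∈ OPT, 0 < h i) :
    ∃ B : ℕ, 1 ≤ B ∧ B ≤ ⌈(8 : ℝ) / ε⌉₊ ∧
      ({i ∈ (OPT : Set ι) |
          ((1 : ℝ) / k) ^ (B + 2) * N ≤ h i ∧ h i < ((1 : ℝ) / k) ^ B * N}.ncard : ℝ)
        ≤ ε / 2 * OPT.card := by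
  classical
  set M := ⌈(8 : ℝ) / ε⌉₊ with hMdef
  have hM1 : 1 ≤ M := Nat.one_le_ceil_iff.mpr (by positivity)
  by_contra hcon
  push_neg at hcon
  set P : ℕ → ι → Prop := fun B i =>
    ((1 : ℝ) / k) ^ (B + 2) * N ≤ h i ∧ h i < ((1 : ℝ) / k) ^ B * N with hP
  have hset : ∀ B, {i ∈ (OPT : Set ι) |
      ((1 : ℝ) / k) ^ (B + 2) * N ≤ h i ∧ h i < ((1 : ℝ) / k) ^ B * N}.ncard
      = (OPT.filter (fun i => P B i)).card := by
    intro B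
    rw [← Set.ncard_coe_finset]
    congr 1
    ext i
    simp [P]
  have hk0 : (0 : ℝ) < (1 : ℝ) / k := by
    have : (0 : ℝ) < (k : ℝ) := by exact_mod_cast Nat.lt_of_lt_of_le (by norm_num) hk
    positivity
  have hkR : (0 : ℝ) < (k : ℝ) := by exact_mod_cast Nat.lt_of_lt_of_le (by norm_num) hk
  have hk1 : ((1 : ℝ) / k) ≤ 1 := by
    rw [div_le_one hkR]
    exact_mod_cast Nat.le_of_lt (Nat.lt_of_lt_of_le (by norm_num) hk)
  have hinner : ∀ i, ((Finset.Icc 1 M).filter (fun B => P B i)).card ≤ 2 := by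
    intro i
    set T := (Finset.Icc 1 M).filter (fun B => P B i) with hT
    rcases T.eq_empty_or_nonempty with hTe | hTn
    · simp [hTe]
    · have hsub : T ⊆ Finset.Icc (T.min' hTn) (T.min' hTn + 1) := by
        intro B hB
        rw [Finset.mem_Icc]
        refine ⟨T.min'_le B hB, ?_⟩
        by_contra hB2
        push_neg at hB2
        have h1 : P (T.min' hTn) i := (Finset.mem_filter.mp (T.min'_mem hTn)).2
        have h2 : P B i := (Finset.mem_filter.mp hB).2
        have hpow : ((1 : ℝ) / k) ^ B ≤ ((1 : ℝ) / k) ^ (T.min' hTn + 2) :=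
          pow_le_pow_of_le_one hk0.le hk1 (by omega)
        have := mul_le_mul_of_nonneg_right hpow hN.le
        have := h2.2
        have := h1.1
        linarith
      calc T.card ≤ (Finset.Icc (T.min' hTn) (T.min' hTn + 1)).card :=
            Finset.card_le_card hsub
        _ ≤ 2 := by rw [Nat.card_Icc]; omega
  have hsum : ∑ B ∈ Finset.Icc 1 M, (OPT.filter (fun i => P B i)).card ≤ 2 * OPT.card := by
    have hcomm : ∑ B ∈ Finset.Icc 1 M, (OPT.filter (fun i => P B i)).card
        = ∑ i ∈ OPT, ((Finset.Icc 1 M).filter (fun B => P B i)).card := by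
      simp_rw [Finset.card_filter]
      exact Finset.sum_comm
    rw [hcomm]
    calc ∑ i ∈ OPT, ((Finset.Icc 1 M).filter (fun B => P B i)).card
        ≤ ∑ _i ∈ OPT, 2 := Finset.sum_le_sum (fun i _ => hinner i)
      _ = 2 * OPT.card := by rw [Finset.sum_const]; ring
  have hlb : ∀ B ∈ Finset.Icc 1 M,
      ε / 2 * OPT.card < ((OPT.filter (fun i => P B i)).card : ℝ) := by
    intro B hB
    rw [Finset.mem_Icc] at hB
    have := hcon B hB.1 hB.2
    rwa [hset B] at this
  have hne : (Finset.Icc 1 M).Nonempty := ⟨1, by simp [hM1]⟩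
  have hstrict : (M : ℝ) * (ε / 2 * OPT.card)
      < ∑ B ∈ Finset.Icc 1 M, ((OPT.filter (fun i => P B i)).card : ℝ) := by
    have := Finset.sum_lt_sum_of_nonempty hne hlb
    simpa [Finset.sum_const, Nat.card_Icc, nsmul_eq_mul] using this
  have hcast : (∑ B ∈ Finset.Icc 1 M, ((OPT.filter (fun i => P B i)).card : ℝ))
      ≤ 2 * OPT.card := by exact_mod_cast hsum
  have h4 : (4 : ℝ) ≤ (M : ℝ) * (ε / 2) := by
    have hle := Nat.le_ceil ((8 : ℝ) / ε)
    rw [div_le_iff₀ hε] at hle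
    rw [← hMdef] at hle
    nlinarith
  have hc0 : (0 : ℝ) ≤ (OPT.card : ℝ) := Nat.cast_nonneg _
  nlinarith
end

section
/- Let s > 0 and let D be an axis-parallel open rectangle with width at most s and height at most s. Let F be a finite family of pairwise disjoint axis-parallel open rectangles, each with width at least s and height at least s. Then at most 4 members of F intersect D. -/
lemma oneD {s a b u₁ u₂ v₁ v₂ : ℝ} (hs : b - a ≤ s)
    (hu : s ≤ u₂ - u₁) (hv : s ≤ v₂ - v₁)
    (hu1 : u₁ < b) (hu2 : a < u₂) (hv1 : v₁ < b) (hv2 : a < v₂)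
    (heq : (u₁ ≤ a) ↔ (v₁ ≤ a)) : max u₁ v₁ < min u₂ v₂ := by
  rcases le_or_gt u₁ a with h | h
  · have hv' := heq.mp h
    have : max u₁ v₁ ≤ a := max_le h hv'
    have : a < min u₂ v₂ := lt_min hu2 hv2
    linarith [max_le h hv', lt_min hu2 hv2]
  · have hv' : a < v₁ := lt_of_not_ge (fun hc => absurd (heq.mpr hc) (not_le.mpr h))
    have h1 : b < u₂ := by linarith
    have h2 : b < v₂ := by linarith
    have : max u₁ v₁ < b := max_lt hu1 hv1
    have : b < min u₂ v₂ := lt_min h1 h2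
    linarith

/-- A small open rectangle `D` (width and height at most `s`) is intersected
by at most `4` members of any finite pairwise disjoint family of open rectangles each of
width and height at least `s`. -/
theorem stmt_6 {ι : Type} (s : ℝ) (hs : 0 < s)
    (a b c d : ℝ) (hab : a < b) (hcd : c < d) (hWD : b - a ≤ s) (hHD : d - c ≤ s)
    (F : Finset ι) (x₁ x₂ y₁ y₂ : ι → ℝ)
    (hx : ∀ i ∈ F, x₁ i < x₂ i) (hy : ∀ i ∈ F, y₁ i < y₂ i)
    (hW : ∀ i ∈ F, s ≤ x₂ i - x₁ i) (hH : ∀ i ∈ F, s ≤ y₂ i - y₁ i)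
    (hdisj : ∀ i ∈ F, ∀ j ∈ F, i ≠ j →
      (Set.Ioo (x₁ i) (x₂ i) ×ˢ Set.Ioo (y₁ i) (y₂ i)) ∩
      (Set.Ioo (x₁ j) (x₂ j) ×ˢ Set.Ioo (y₁ j) (y₂ j)) = ∅) :
    {i ∈ (F : Set ι) |
      ((Set.Ioo (x₁ i) (x₂ i) ×ˢ Set.Ioo (y₁ i) (y₂ i)) ∩
        (Set.Ioo a b ×ˢ Set.Ioo c d)).Nonempty}.ncard ≤ 4 := by
  set S := {i ∈ (F : Set ι) |
      ((Set.Ioo (x₁ i) (x₂ i) ×ˢ Set.Ioo (y₁ i) (y₂ i)) ∩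
        (Set.Ioo a b ×ˢ Set.Ioo c d)).Nonempty} with hS
  have key : ∀ i ∈ S, x₁ i < b ∧ a < x₂ i ∧ y₁ i < d ∧ c < y₂ i := by
    rintro i ⟨hiF, p, ⟨hp1, hp2⟩, ⟨hq1, hq2⟩⟩
    exact ⟨lt_trans hp1.1 hq1.2, lt_trans hq1.1 hp1.2,
      lt_trans hp2.1 hq2.2, lt_trans hq2.1 hp2.2⟩
  have hinj : Set.InjOn (fun i => (decide (x₁ i ≤ a), decide (y₁ i ≤ c))) S := by
    intro i hi j hj hij
    by_contra hne
    obtain ⟨hi1, hi2, hi3, hi4⟩ := key i hi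
    obtain ⟨hj1, hj2, hj3, hj4⟩ := key j hj
    have hiF : i ∈ F := hi.1
    have hjF : j ∈ F := hj.1
    simp only [Prod.mk.injEq, decide_eq_decide] at hij
    have hxm : max (x₁ i) (x₁ j) < min (x₂ i) (x₂ j) :=
      oneD hWD (hW i hiF) (hW j hjF) hi1 hi2 hj1 hj2 hij.1
    have hym : max (y₁ i) (y₁ j) < min (y₂ i) (y₂ j) :=
      oneD hHD (hH i hiF) (hH j hjF) hi3 hi4 hj3 hj4 hij.2
    set px := (max (x₁ i) (x₁ j) + min (x₂ i) (x₂ j)) / 2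
    set py := (max (y₁ i) (y₁ j) + min (y₂ i) (y₂ j)) / 2
    have hmem : (px, py) ∈
        (Set.Ioo (x₁ i) (x₂ i) ×ˢ Set.Ioo (y₁ i) (y₂ i)) ∩
        (Set.Ioo (x₁ j) (x₂ j) ×ˢ Set.Ioo (y₁ j) (y₂ j)) := by
      have h1 := le_max_left (x₁ i) (x₁ j)
      have h2 := le_max_right (x₁ i) (x₁ j)
      have h3 := min_le_left (x₂ i) (x₂ j)
      have h4 := min_le_right (x₂ i) (x₂ j)
      have h5 := le_max_left (y₁ i) (y₁ j)
      have h6 := le_max_right (y₁ i) (y₁ j)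
      have h7 := min_le_left (y₂ i) (y₂ j)
      have h8 := min_le_right (y₂ i) (y₂ j)
      refine ⟨⟨⟨?_, ?_⟩, ⟨?_, ?_⟩⟩, ⟨⟨?_, ?_⟩, ⟨?_, ?_⟩⟩⟩ <;> simp only [px, py] <;> linarith
    rw [hdisj i hiF j hjF hne] at hmem
    exact hmem
  have hle := Set.ncard_le_ncard_of_injOn _ (fun i _ => Set.mem_univ _) hinj
    (Set.finite_univ (α := Bool × Bool))
  simpa [Set.ncard_univ] using hle
end

section
/- Let N > 0 be real, let k' and k̃ be positive integers, and set δ := N/(k'·k̃). Suppose R_i = (a_i, a_i + w_i) × (b_i, b_i + h_i), for i = 1,…,k', are pairwise disjoint axis-parallel open rectangles contained in [0,N] × [N/k̃, N]. For each i let ĥ_i := ⌈h_i/δ⌉·δ. Then there exist reals b'_i ≥ 0 such that the rectangles (a_i, a_i + w_i) × (b'_i, b'_i + ĥ_i), i = 1,…,k', are pairwise disjoint and all contained in [0,N] × [0,N]. (The heights can be rounded up to integer multiples of δ, keeping the same widths and horizontal positions, using the empty strip of height N/k̃ at the bottom.) -/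
/-!
Push every rectangle down by `δ` times one plus the number of rectangles stacked above it (in
the transitive "lies below, with overlapping horizontal shadows" relation). A rectangle lying
below another has strictly more rectangles stacked above it, so it moves down by at least `δ`
more; this extra room absorbs the rounding `⌈h/δ⌉·δ < h + δ`, which keeps the two apart. At most
`k' - 1` rectangles are stacked above any one, so nothing moves down by more than `k'·δ = N/k̃`,
the height of the empty bottom strip.
-/

open Set Relation

section Reach

variable {ι : Type*} [Finite ι] {r : ι → ι → Prop}

theorem ncard_transGen_lt_of_rel (hr : ∀ i, ¬TransGen r i i) {i j : ι} (hij : r i j) :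
    {k | TransGen r j k}.ncard < {k | TransGen r i k}.ncard := by
  refine ncard_lt_ncard ⟨fun k hk => TransGen.head hij hk, fun hsub => hr j ?_⟩
  exact hsub (TransGen.single hij)

theorem ncard_transGen_lt_card (hr : ∀ i, ¬TransGen r i i) (i : ι) :
    {k | TransGen r i k}.ncard < Nat.card ι :=
  ncard_lt_card fun h => hr i (eq_univ_iff_forall.1 h i)

end Reach

section Lowering

variable {α ι : Type*} (X : ι → Set α) (b h : ι → ℝ)

def LiesBelow (i j : ι) : Prop := (X i ∩ X j).Nonempty ∧ b i + h i ≤ b j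

variable {X b h}

theorem LiesBelow.transGen_lt (hh : ∀ i, 0 < h i) {i j : ι}
    (hij : TransGen (LiesBelow X b h) i j) : b i < b j := by
  induction hij with
  | single hs => linarith [hh i, hs.2]
  | @tail j k _ hs ih => linarith [hh j, hs.2]

theorem LiesBelow.not_transGen_self (hh : ∀ i, 0 < h i) (i : ι) :
    ¬TransGen (LiesBelow X b h) i i :=
  fun hi => (LiesBelow.transGen_lt hh hi).false

theorem liesBelow_or_liesBelow_of_disjoint_Ioo (hh : ∀ i, 0 < h i) {i j : ι}
    (hX : (X i ∩ X j).Nonempty) (hy : Disjoint (Ioo (b i) (b i + h i)) (Ioo (b j) (b j + h j))) :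
    LiesBelow X b h i j ∨ LiesBelow X b h j i := by
  rw [Ioo_disjoint_Ioo, min_le_iff, le_max_iff, le_max_iff] at hy
  have := hh i
  have := hh j
  rcases hy with (hy | hy) | (hy | hy)
  · linarith
  · exact Or.inl ⟨hX, hy⟩
  · exact Or.inr ⟨by rwa [inter_comm], hy⟩
  · linarith

variable (X b h) in
noncomputable def stackedAbove (i : ι) : ℕ := {k | TransGen (LiesBelow X b h) i k}.ncard

variable [Finite ι] {d : ℝ} {H : ι → ℝ}

theorem LiesBelow.lowered_top_le_bottom (hh : ∀ i, 0 < h i) (hd : 0 ≤ d)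
    (hH : ∀ i, H i ≤ h i + d) {i j : ι} (hij : LiesBelow X b h i j) :
    b i - d * (stackedAbove X b h i + 1) + H i ≤ b j - d * (stackedAbove X b h j + 1) := by
  have hlt : stackedAbove X b h j < stackedAbove X b h i :=
    ncard_transGen_lt_of_rel (LiesBelow.not_transGen_self hh) hij
  have hle : (stackedAbove X b h j : ℝ) + 1 ≤ stackedAbove X b h i := by exact_mod_cast hlt
  linarith [mul_le_mul_of_nonneg_left hle hd, hH i, hij.2]

theorem exists_lowered_pairwise_disjoint (hh : ∀ i, 0 < h i) (hd : 0 ≤ d)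
    (hH : ∀ i, H i ≤ h i + d)
    (hdisj : Pairwise fun i j =>
      Disjoint (X i ×ˢ Ioo (b i) (b i + h i)) (X j ×ˢ Ioo (b j) (b j + h j))) :
    ∃ b' : ι → ℝ, (∀ i, b i - d * Nat.card ι ≤ b' i ∧ b' i + H i ≤ b i + h i) ∧
      Pairwise fun i j =>
        Disjoint (X i ×ˢ Ioo (b' i) (b' i + H i)) (X j ×ˢ Ioo (b' j) (b' j + H j)) := by
  refine ⟨fun i => b i - d * (stackedAbove X b h i + 1), fun i => ⟨?_, ?_⟩, fun i j hij => ?_⟩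
  · have hlt : (stackedAbove X b h i : ℝ) + 1 ≤ Nat.card ι := by
      exact_mod_cast ncard_transGen_lt_card (LiesBelow.not_transGen_self hh) i
    linarith [mul_le_mul_of_nonneg_left hlt hd]
  · have : 0 ≤ d * stackedAbove X b h i := by positivity
    linarith [hH i]
  · beta_reduce
    rw [disjoint_prod]
    by_cases hX : Disjoint (X i) (X j)
    · exact Or.inl hX
    have hy := (disjoint_prod.1 (hdisj hij)).resolve_left hX
    rw [not_disjoint_iff_nonempty_inter] at hX
    right
    rcases liesBelow_or_liesBelow_of_disjoint_Ioo hh hX hy with hij' | hji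
    · exact Ioo_disjoint_Ioo.2 <| (min_le_left _ _).trans <|
        (hij'.lowered_top_le_bottom hh hd hH).trans (le_max_right _ _)
    · exact Ioo_disjoint_Ioo.2 <| (min_le_right _ _).trans <|
        (hji.lowered_top_le_bottom hh hd hH).trans (le_max_left _ _)

end Lowering

theorem le_and_le_of_Ioo_subset_Icc {p q u v : ℝ} (hpq : p < q) (hs : Ioo p q ⊆ Icc u v) :
    u ≤ p ∧ q ≤ v := by
  rw [← Icc_subset_Icc_iff hpq.le, ← closure_Ioo hpq.ne]
  exact isClosed_Icc.closure_subset_iff.2 hs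

theorem Ioo_prod_Ioo_subset_Icc_prod_Icc {a a' b b' c c' e e' : ℝ} (ha : a < a') (hb : b < b')
    (hs : Ioo a a' ×ˢ Ioo b b' ⊆ Icc c c' ×ˢ Icc e e') :
    (c ≤ a ∧ a' ≤ c') ∧ (e ≤ b ∧ b' ≤ e') := by
  rw [prod_subset_prod_iff' ((nonempty_Ioo.2 ha).prod (nonempty_Ioo.2 hb))] at hs
  exact ⟨le_and_le_of_Ioo_subset_Icc ha hs.1, le_and_le_of_Ioo_subset_Icc hb hs.2⟩

theorem Int.ceil_div_mul_le_add {d : ℝ} (hd : 0 < d) (x : ℝ) : (⌈x / d⌉ : ℝ) * d ≤ x + d := by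
  calc (⌈x / d⌉ : ℝ) * d ≤ (x / d + 1) * d := by gcongr; exact (Int.ceil_lt_add_one _).le
    _ = x + d := by field_simp

/-- Height rounding. If `k'` pairwise disjoint open rectangles are packed in
`[0,N] × [N/k̃, N]`, then their heights can be rounded up to integer multiples of
`δ = N/(k'·k̃)` (keeping widths and horizontal positions) and repacked, pairwise disjoint,
inside `[0,N] × [0,N]`. -/
theorem stmt_9 (N : ℝ) (hN : 0 < N) (k' kt : ℕ) (hk' : 0 < k') (hkt : 0 < kt)
    (a w b h : Fin k' → ℝ) (hw : ∀ i, 0 < w i) (hh : ∀ i, 0 < h i)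
    (hsub : ∀ i, Set.Ioo (a i) (a i + w i) ×ˢ Set.Ioo (b i) (b i + h i) ⊆
      Set.Icc (0 : ℝ) N ×ˢ Set.Icc (N / (kt : ℝ)) N)
    (hdisj : ∀ i j, i ≠ j →
      (Set.Ioo (a i) (a i + w i) ×ˢ Set.Ioo (b i) (b i + h i)) ∩
      (Set.Ioo (a j) (a j + w j) ×ˢ Set.Ioo (b j) (b j + h j)) = ∅) :
    ∃ b' : Fin k' → ℝ, (∀ i, 0 ≤ b' i) ∧
      (∀ i j, i ≠ j →
        (Set.Ioo (a i) (a i + w i) ×ˢ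
          Set.Ioo (b' i) (b' i +
            (⌈h i / (N / ((k' : ℝ) * (kt : ℝ)))⌉ : ℝ) * (N / ((k' : ℝ) * (kt : ℝ))))) ∩
        (Set.Ioo (a j) (a j + w j) ×ˢ
          Set.Ioo (b' j) (b' j +
            (⌈h j / (N / ((k' : ℝ) * (kt : ℝ)))⌉ : ℝ) * (N / ((k' : ℝ) * (kt : ℝ))))) = ∅) ∧
      (∀ i, Set.Ioo (a i) (a i + w i) ×ˢ
          Set.Ioo (b' i) (b' i +
            (⌈h i / (N / ((k' : ℝ) * (kt : ℝ)))⌉ : ℝ) * (N / ((k' : ℝ) * (kt : ℝ)))) ⊆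
        Set.Icc (0 : ℝ) N ×ˢ Set.Icc (0 : ℝ) N) := by
  set δ : ℝ := N / ((k' : ℝ) * (kt : ℝ))
  have hδ : 0 < δ := by positivity
  have hδk : δ * k' = N / kt := by simp only [δ]; field_simp
  have hbox i := Ioo_prod_Ioo_subset_Icc_prod_Icc (by linarith [hw i]) (by linarith [hh i]) (hsub i)
  obtain ⟨b', hb', hdisj'⟩ := exists_lowered_pairwise_disjoint (X := fun i => Ioo (a i) (a i + w i))
    hh hδ.le (fun i => Int.ceil_div_mul_le_add hδ (h i))
    (fun i j hij => disjoint_iff_inter_eq_empty.2 (hdisj i j hij))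
  rw [Nat.card_eq_fintype_card, Fintype.card_fin, hδk] at hb'
  have hb'_nonneg i : 0 ≤ b' i := by linarith [(hb' i).1, (hbox i).2.1]
  refine ⟨b', hb'_nonneg, fun i j hij => disjoint_iff_inter_eq_empty.1 (hdisj' hij), fun i => ?_⟩
  refine prod_mono (Ioo_subset_Icc_self.trans (Icc_subset_Icc (hbox i).1.1 (hbox i).1.2))
    (Ioo_subset_Icc_self.trans (Icc_subset_Icc (hb'_nonneg i) ?_))
  linarith [(hb' i).2, (hbox i).2.2]
end

section
/- Let N > 0 and let I be a finite set of items, where each item i ∈ I has a width w_i > 0 and a height h_i > 0. Say a subset S ⊆ I is packable if there exist reals a_i, b_i ≥ 0 for i ∈ S such that the axis-parallel open rectangles (a_i, a_i + w_i)×(b_i, b_i + h_i), i ∈ S, are pairwise disjoint and contained in [0,N]×[0,N]. If S ⊆ I is packable and |S| = k', then there exists a packable set S' ⊆ I with |S'| = k' such that for every i ∈ S' the number of items j ∈ I with h_j = h_i and w_j < w_i is strictly less than k' (i.e., from every height class the packing uses only items among the k' items of smallest width). -/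
/-- `S` is packable into the square `[0,N]²`: there are nonnegative placements of the items
of `S` as pairwise disjoint open rectangles contained in `[0,N] × [0,N]`. -/
def Packable {ι : Type} (N : ℝ) (w h : ι → ℝ) (S : Finset ι) : Prop :=
  ∃ a b : ι → ℝ, (∀ i ∈ S, 0 ≤ a i ∧ 0 ≤ b i) ∧
    (∀ i ∈ S, ∀ j ∈ S, i ≠ j →
      (Set.Ioo (a i) (a i + w i) ×ˢ Set.Ioo (b i) (b i + h i)) ∩
      (Set.Ioo (a j) (a j + w j) ×ˢ Set.Ioo (b j) (b j + h j)) = ∅) ∧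
    (∀ i ∈ S, Set.Ioo (a i) (a i + w i) ×ˢ Set.Ioo (b i) (b i + h i) ⊆
      Set.Icc (0 : ℝ) N ×ˢ Set.Icc (0 : ℝ) N)

/-- If a set `S ⊆ I` of `k'` items is packable, then there is a packable set
`S' ⊆ I` of `k'` items that, from every height class, only uses items among the `k'` items
of smallest width. -/
theorem stmt_10 {ι : Type} [DecidableEq ι] (N : ℝ) (hN : 0 < N) (I : Finset ι)
    (w h : ι → ℝ) (hw : ∀ i ∈ I, 0 < w i) (hh : ∀ i ∈ I, 0 < h i)
    (S : Finset ι) (hS : S ⊆ I) (k' : ℕ) (hcard : S.card = k')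
    (hpack : Packable N w h S) :
    ∃ S' : Finset ι, S' ⊆ I ∧ S'.card = k' ∧ Packable N w h S' ∧
      ∀ i ∈ S', {j ∈ (I : Set ι) | h j = h i ∧ w j < w i}.ncard < k' := by
  classical
  set c : ι → ℕ := fun x => (I.filter (fun y => h y = h x ∧ w y < w x)).card with hc
  suffices H : ∀ n (S : Finset ι), (∑ x ∈ S, c x) = n → S ⊆ I → S.card = k' →
      Packable N w h S →
      ∃ S' : Finset ι, S' ⊆ I ∧ S'.card = k' ∧ Packable N w h S' ∧ ∀ i ∈ S', c i < k' by
    obtain ⟨S', h1, h2, h3, h4⟩ := H _ S rfl hS hcard hpack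
    refine ⟨S', h1, h2, h3, fun i hi => ?_⟩
    have hset : {j ∈ (I : Set ι) | h j = h i ∧ w j < w i} =
        ↑(I.filter (fun y => h y = h i ∧ w y < w i)) := by
      ext x; simp
    rw [hset, Set.ncard_coe_finset]
    exact h4 i hi
  intro n
  induction n using Nat.strong_induction_on with
  | _ n ih =>
    intro S hsum hSI hScard hSpack
    by_cases hall : ∀ i ∈ S, c i < k'
    · exact ⟨S, hSI, hScard, hSpack, hall⟩
    push_neg at hall
    obtain ⟨i0, hi0S, hi0c⟩ := hall
    have hk1 : 1 ≤ k' := hScard ▸ Finset.card_pos.mpr ⟨i0, hi0S⟩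
    have hi0T : i0 ∉ I.filter (fun y => h y = h i0 ∧ w y < w i0) := by
      simp
    have hjex : ∃ j0 ∈ I.filter (fun y => h y = h i0 ∧ w y < w i0), j0 ∉ S := by
      by_contra hcon
      push_neg at hcon
      have hsub : I.filter (fun y => h y = h i0 ∧ w y < w i0) ⊆ S.erase i0 := by
        intro x hx
        exact Finset.mem_erase.mpr ⟨fun hxe => hi0T (hxe ▸ hx), hcon x hx⟩
      have := Finset.card_le_card hsub
      rw [Finset.card_erase_of_mem hi0S, hScard] at this
      have : c i0 ≤ k' - 1 := this
      omega
    obtain ⟨j0, hj0T, hj0S⟩ := hjex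
    have hj0I : j0 ∈ I := (Finset.mem_filter.mp hj0T).1
    obtain ⟨hhj0, hwj0⟩ := (Finset.mem_filter.mp hj0T).2
    have hj0e : j0 ∉ S.erase i0 := fun hx => hj0S (Finset.mem_of_mem_erase hx)
    set S' := insert j0 (S.erase i0) with hS'
    have hS'I : S' ⊆ I := by
      intro x hx
      rcases Finset.mem_insert.mp hx with rfl | hx
      · exact hj0I
      · exact hSI (Finset.mem_of_mem_erase hx)
    have hS'card : S'.card = k' := by
      rw [hS', Finset.card_insert_of_notMem hj0e, Finset.card_erase_of_mem hi0S, hScard]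
      omega
    -- packability of S'
    obtain ⟨a, b, hab0, hdisj, hin⟩ := hSpack
    set a' : ι → ℝ := fun x => if x = j0 then a i0 else a x with ha'
    set b' : ι → ℝ := fun x => if x = j0 then b i0 else b x with hb'
    set φ : ι → ι := fun x => if x = j0 then i0 else x with hφ
    have key : ∀ x ∈ S', φ x ∈ S ∧
        Set.Ioo (a' x) (a' x + w x) ×ˢ Set.Ioo (b' x) (b' x + h x) ⊆
        Set.Ioo (a (φ x)) (a (φ x) + w (φ x)) ×ˢ Set.Ioo (b (φ x)) (b (φ x) + h (φ x)) := by
      intro x hx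
      rcases Finset.mem_insert.mp hx with rfl | hx
      · simp only [hφ, ha', hb', if_pos rfl]
        refine ⟨hi0S, Set.prod_mono ?_ ?_⟩
        · exact Set.Ioo_subset_Ioo_right (by linarith)
        · rw [hhj0]
      · have hxj : x ≠ j0 := fun hxe => hj0e (hxe ▸ hx)
        simp only [hφ, ha', hb', if_neg hxj]
        exact ⟨Finset.mem_of_mem_erase hx, subset_rfl⟩
    have hφinj : ∀ x ∈ S', ∀ y ∈ S', x ≠ y → φ x ≠ φ y := by
      intro x hx y hy hxy
      by_cases hxj : x = j0 <;> by_cases hyj : y = j0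
      · exact absurd (hxj.trans hyj.symm) hxy
      · have hy' : y ∈ S.erase i0 := (Finset.mem_insert.mp hy).resolve_left hyj
        simp only [hφ, if_pos hxj, if_neg hyj]
        exact fun he => (Finset.mem_erase.mp hy').1 he.symm
      · have hx' : x ∈ S.erase i0 := (Finset.mem_insert.mp hx).resolve_left hxj
        simp only [hφ, if_neg hxj, if_pos hyj]
        exact fun he => (Finset.mem_erase.mp hx').1 he
      · simpa only [hφ, if_neg hxj, if_neg hyj] using hxy
    have hS'pack : Packable N w h S' := by
      refine ⟨a', b', ?_, ?_, ?_⟩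
      · intro x hx
        rcases Finset.mem_insert.mp hx with rfl | hx
        · simpa only [ha', hb', if_pos rfl] using hab0 i0 hi0S
        · have hxj : x ≠ j0 := fun he => hj0e (he ▸ hx)
          simpa only [ha', hb', if_neg hxj] using hab0 x (Finset.mem_of_mem_erase hx)
      · intro x hx y hy hxy
        have hsub := Set.inter_subset_inter (key x hx).2 (key y hy).2
        rw [hdisj (φ x) (key x hx).1 (φ y) (key y hy).1 (hφinj x hx y hy hxy)] at hsub
        exact Set.subset_empty_iff.mp hsub
      · intro x hx
        exact (key x hx).2.trans (hin (φ x) (key x hx).1)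
    -- measure decreases
    have hcc : c j0 < c i0 := by
      have hsub : I.filter (fun y => h y = h j0 ∧ w y < w j0) ⊆
          I.filter (fun y => h y = h i0 ∧ w y < w i0) := by
        intro y hy
        simp only [Finset.mem_filter] at hy ⊢
        exact ⟨hy.1, hy.2.1.trans hhj0, hy.2.2.trans hwj0⟩
      exact Finset.card_lt_card
        ((Finset.ssubset_iff_of_subset hsub).mpr ⟨j0, hj0T, by simp⟩)
    have hlt : (∑ x ∈ S', c x) < n := by
      rw [hS', Finset.sum_insert hj0e, ← hsum, ← Finset.add_sum_erase S c hi0S]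
      omega
    exact ih _ hlt S' rfl hS'I hS'card hS'pack
end

section
/- Let k ≥ 1 be an integer and let L > 1 and N > 0 be reals with N < k(L−1) + L. Then every finite family of pairwise disjoint axis-parallel open rectangles contained in (0,N)×(0,N), each of width at least L and height at least L, has at most k² members. -/
/-- Key pigeonhole lemma: an interval `(u,v) ⊆ (0,N)` of length ≥ L contains a
multiple `a*(L-1)` with `1 ≤ a ≤ k`. -/
lemma grid_lemma (k : ℕ) (L N : ℝ) (hL : 1 < L) (hNk : N < k * (L - 1) + L)
    (u v : ℝ) (hu : 0 ≤ u) (huv : u + L ≤ v) (hv : v ≤ N) :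
    let a := ⌊u / (L - 1)⌋₊ + 1
    1 ≤ a ∧ a ≤ k ∧ u < a * (L - 1) ∧ a * (L - 1) < v := by
  have hL1 : (0:ℝ) < L - 1 := by linarith
  set m := ⌊u / (L - 1)⌋₊ with hm
  refine ⟨Nat.le_add_left 1 m, ?_, ?_, ?_⟩
  · -- m * (L-1) ≤ u < k * (L-1)
    have h1 : (m:ℝ) * (L - 1) ≤ u := by
      have := Nat.floor_le (by positivity : 0 ≤ u / (L - 1))
      calc (m:ℝ) * (L - 1) ≤ (u / (L - 1)) * (L - 1) := by
            exact mul_le_mul_of_nonneg_right this hL1.le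
        _ = u := by field_simp
    have h2 : u < k * (L - 1) := by linarith
    have : (m:ℝ) < (k:ℝ) := by nlinarith
    have hmk : m < k := by exact_mod_cast this
    omega
  · have := Nat.lt_floor_add_one (u / (L - 1))
    have h3 : u / (L - 1) < (m:ℝ) + 1 := this
    have := (div_lt_iff₀ hL1).mp h3
    push_cast
    linarith
  · have h1 : (m:ℝ) * (L - 1) ≤ u := by
      have := Nat.floor_le (by positivity : 0 ≤ u / (L - 1))
      calc (m:ℝ) * (L - 1) ≤ (u / (L - 1)) * (L - 1) :=
            mul_le_mul_of_nonneg_right this hL1.le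
        _ = u := by field_simp
    push_cast
    nlinarith

/-- If `N < k(L-1) + L` with `L > 1`, then any finite pairwise disjoint
family of open rectangles inside `(0,N) × (0,N)`, each of width and height at least `L`,
has at most `k²` members. -/
theorem stmt_11 {ι : Type} (k : ℕ) (hk : 1 ≤ k) (L N : ℝ) (hL : 1 < L) (hN : 0 < N)
    (hNk : N < k * (L - 1) + L)
    (F : Finset ι) (x₁ x₂ y₁ y₂ : ι → ℝ)
    (hsub : ∀ i ∈ F, Set.Ioo (x₁ i) (x₂ i) ×ˢ Set.Ioo (y₁ i) (y₂ i) ⊆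
      Set.Ioo (0 : ℝ) N ×ˢ Set.Ioo (0 : ℝ) N)
    (hW : ∀ i ∈ F, L ≤ x₂ i - x₁ i) (hH : ∀ i ∈ F, L ≤ y₂ i - y₁ i)
    (hdisj : ∀ i ∈ F, ∀ j ∈ F, i ≠ j →
      (Set.Ioo (x₁ i) (x₂ i) ×ˢ Set.Ioo (y₁ i) (y₂ i)) ∩
      (Set.Ioo (x₁ j) (x₂ j) ×ˢ Set.Ioo (y₁ j) (y₂ j)) = ∅) :
    F.card ≤ k ^ 2 := by
  have hL0 : (0:ℝ) < L := by linarith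
  -- basic bounds on rectangles
  have hbounds : ∀ i ∈ F, 0 ≤ x₁ i ∧ x₂ i ≤ N ∧ 0 ≤ y₁ i ∧ y₂ i ≤ N := by
    intro i hi
    have hx : x₁ i < x₂ i := by have := hW i hi; linarith
    have hy : y₁ i < y₂ i := by have := hH i hi; linarith
    have hx' : Set.Ioo (x₁ i) (x₂ i) ⊆ Set.Ioo (0:ℝ) N := by
      intro t ht
      have : (t, (y₁ i + y₂ i)/2) ∈ Set.Ioo (0:ℝ) N ×ˢ Set.Ioo (0:ℝ) N :=
        hsub i hi ⟨ht, by constructor <;> [linarith; linarith]⟩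
      exact this.1
    have hy' : Set.Ioo (y₁ i) (y₂ i) ⊆ Set.Ioo (0:ℝ) N := by
      intro t ht
      have : ((x₁ i + x₂ i)/2, t) ∈ Set.Ioo (0:ℝ) N ×ˢ Set.Ioo (0:ℝ) N :=
        hsub i hi ⟨⟨by linarith, by linarith⟩, ht⟩
      exact this.2
    have h1 := (Set.Ioo_subset_Ioo_iff hx).mp hx'
    have h2 := (Set.Ioo_subset_Ioo_iff hy).mp hy'
    exact ⟨h1.1, h1.2, h2.1, h2.2⟩
  set f : ι → ℕ × ℕ := fun i => (⌊x₁ i / (L - 1)⌋₊ + 1, ⌊y₁ i / (L - 1)⌋₊ + 1) with hf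
  have key : ∀ i ∈ F, ((f i).1 : ℝ) * (L-1) ∈ Set.Ioo (x₁ i) (x₂ i) ∧
      ((f i).2 : ℝ) * (L-1) ∈ Set.Ioo (y₁ i) (y₂ i) ∧
      (f i).1 ∈ Finset.Icc 1 k ∧ (f i).2 ∈ Finset.Icc 1 k := by
    intro i hi
    obtain ⟨h1, h2, h3, h4⟩ := hbounds i hi
    obtain ⟨a1, a2, a3, a4⟩ := grid_lemma k L N hL hNk (x₁ i) (x₂ i) h1
      (by have := hW i hi; linarith) h2
    obtain ⟨b1, b2, b3, b4⟩ := grid_lemma k L N hL hNk (y₁ i) (y₂ i) h3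
      (by have := hH i hi; linarith) h4
    exact ⟨⟨a3, a4⟩, ⟨b3, b4⟩, Finset.mem_Icc.mpr ⟨a1, a2⟩, Finset.mem_Icc.mpr ⟨b1, b2⟩⟩
  have hinj : Set.InjOn f F := by
    intro i hi j hj hij
    by_contra hne
    obtain ⟨hxi, hyi, _, _⟩ := key i hi
    obtain ⟨hxj, hyj, _, _⟩ := key j hj
    have hpt : (((f i).1 : ℝ) * (L-1), ((f i).2 : ℝ) * (L-1)) ∈
        (Set.Ioo (x₁ i) (x₂ i) ×ˢ Set.Ioo (y₁ i) (y₂ i)) ∩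
        (Set.Ioo (x₁ j) (x₂ j) ×ˢ Set.Ioo (y₁ j) (y₂ j)) := by
      refine ⟨⟨hxi, hyi⟩, ?_⟩
      rw [hij]
      exact ⟨hxj, hyj⟩
    rw [hdisj i hi j hj hne] at hpt
    exact hpt
  have hmap : ∀ i ∈ F, f i ∈ Finset.Icc 1 k ×ˢ Finset.Icc 1 k := by
    intro i hi
    obtain ⟨_, _, h3, h4⟩ := key i hi
    exact Finset.mem_product.mpr ⟨h3, h4⟩
  calc F.card ≤ (Finset.Icc 1 k ×ˢ Finset.Icc 1 k).card :=
        Finset.card_le_card_of_injOn f hmap hinj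
    _ = k ^ 2 := by simp [Nat.card_Icc, sq]
end

section
/- Let k ≥ 4 and t ≥ 1 be integers and let y₁,…,y_k be integers with 1 ≤ y_i ≤ t−1 for all i and y₁ + … + y_k = t. Define S := k²·t, L := k²·S, and N := k·L + (2k−1)·S + (2k−1)·t, and for a,b ∈ {1,…,k} set σ(a,b) := 1 + ((a−b) mod k). Then there exists a family of pairwise disjoint axis-parallel open rectangles, all contained in [0,N]×[0,N], consisting of: (i) for each pair (a,b) ∈ {1,…,k}², one rectangle of width L+S+2t−y_{σ(a,b)} and height L+S+y_{σ(a,b)}; (ii) k(k−1) rectangles of width S and height L; (iii) k(k−1) rectangles of width L and height S; and (iv) one rectangle of width N and height (2k−2)·t. In total these are k² + 2k(k−1) + 1 pairwise disjoint rectangles inside the N×N square. -/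
/-- `σ(a,b) = 1 + ((a - b) mod k)` for `1`-based indices `a, b ∈ {1,…,k}`. -/
def tileIdx (k a b : ℕ) : ℕ := 1 + (((a : ℤ) - (b : ℤ)) % (k : ℤ)).toNat

/-- The index type for the packing: `k²` tiles, `k(k-1)` thin items, `k(k-1)` flat
items, and one bar. -/
def PackIdx (k : ℕ) : Type :=
  (Fin k × Fin k) ⊕ (Fin (k * (k - 1)) ⊕ (Fin (k * (k - 1)) ⊕ Unit))

/-- Widths: a tile `(a,b)` has width `L + S + 2t - y_{σ(a,b)}`, thin items have width `S`,
flat items have width `L`, the bar has width `N`. -/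
def packW (k : ℕ) (y : ℕ → ℤ) (t : ℤ) (S L N : ℝ) : PackIdx k → ℝ :=
  Sum.elim
    (fun ab => L + S + 2 * (t : ℝ) - (y (tileIdx k (ab.1.val + 1) (ab.2.val + 1)) : ℝ))
    (Sum.elim (fun _ => S) (Sum.elim (fun _ => L) (fun _ => N)))

/-- Heights: a tile `(a,b)` has height `L + S + y_{σ(a,b)}`, thin items have height `L`,
flat items have height `S`, the bar has height `(2k-2)·t`. -/
def packH (k : ℕ) (y : ℕ → ℤ) (t : ℤ) (S L : ℝ) : PackIdx k → ℝ :=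
  Sum.elim
    (fun ab => L + S + (y (tileIdx k (ab.1.val + 1) (ab.2.val + 1)) : ℝ))
    (Sum.elim (fun _ => L) (Sum.elim (fun _ => S) (fun _ => (2 * (k : ℝ) - 2) * (t : ℝ))))

def pS (k : ℕ) (y : ℕ → ℤ) (a b : ℕ) : ℝ :=
  ∑ j ∈ Finset.range b, ((y (tileIdx k (a + 1) (j + 1)) : ℤ) : ℝ)

def qS (k : ℕ) (y : ℕ → ℤ) (b a : ℕ) : ℝ :=
  ∑ i ∈ Finset.range a, ((y (tileIdx k (i + 1) (b + 1)) : ℤ) : ℝ)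

lemma tileIdx_succ (k a b : ℕ) :
    tileIdx k (a + 1) (b + 1) = 1 + (((a : ℤ) - (b : ℤ)) % (k : ℤ)).toNat := by
  unfold tileIdx; congr 2; push_cast; ring_nf

lemma box_disj {x1 a1 y1 b1 x2 a2 y2 b2 : ℝ}
    (h : a1 ≤ x2 ∨ a2 ≤ x1 ∨ b1 ≤ y2 ∨ b2 ≤ y1) :
    (Set.Ioo x1 a1 ×ˢ Set.Ioo y1 b1) ∩ (Set.Ioo x2 a2 ×ˢ Set.Ioo y2 b2) = ∅ := by
  ext ⟨u, v⟩
  simp only [Set.mem_inter_iff, Set.mem_prod, Set.mem_Ioo, Set.mem_empty_iff_false,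
    iff_false, not_and]
  rintro ⟨⟨h1, h2⟩, h3, h4⟩ ⟨h5, h6⟩ h7
  rcases h with h | h | h | h <;> linarith

lemma box_sub {x e NN : ℝ} (h0 : 0 ≤ x) (hN : e ≤ NN) :
    Set.Ioo x e ⊆ Set.Icc 0 NN :=
  Set.Ioo_subset_Icc_self.trans (Set.Icc_subset_Icc h0 hN)

lemma tileIdx_mem (k : ℕ) (hk : 0 < k) (a b : ℕ) : tileIdx k a b ∈ Finset.Icc 1 k := by
  have hk' : (k : ℤ) ≠ 0 := by exact_mod_cast hk.ne'
  have h1 : 0 ≤ ((a : ℤ) - b) % k := Int.emod_nonneg _ hk'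
  have h2 : ((a : ℤ) - b) % k < k := Int.emod_lt_of_pos _ (by exact_mod_cast hk)
  unfold tileIdx
  set m : ℤ := ((a : ℤ) - b) % k with hm
  rw [Finset.mem_Icc]
  omega

lemma emod_sub_inv (k c j : ℤ) (hk : 0 < k) (h0 : 0 ≤ j) (hj : j < k) :
    (c - (c - j) % k) % k = j := by
  have : (c - (c - j) % k) % k = (c - (c - j)) % k := by
    rw [Int.sub_emod, Int.emod_emod_of_dvd _ dvd_rfl, ← Int.sub_emod]
  rw [this]
  have : c - (c - j) = j := by ring
  rw [this, Int.emod_eq_of_lt h0 hj]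

lemma emod_add_inv (k c j : ℤ) (hk : 0 < k) (h0 : 0 ≤ j) (hj : j < k) :
    ((j - c) % k + c) % k = j := by
  have : ((j - c) % k + c) % k = ((j - c) + c) % k := by
    rw [Int.add_emod, Int.emod_emod_of_dvd _ dvd_rfl, ← Int.add_emod]
  rw [this]
  have : j - c + c = j := by ring
  rw [this, Int.emod_eq_of_lt h0 hj]

lemma sum_range_shift (k : ℕ) (f : ℕ → ℝ) :
    ∑ m ∈ Finset.range k, f (1 + m) = ∑ i ∈ Finset.Icc 1 k, f i := by
  apply Finset.sum_nbij' (i := fun m => 1 + m) (j := fun i => i - 1)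
  · intro a ha; rw [Finset.mem_range] at ha; rw [Finset.mem_Icc]; omega
  · intro a ha; rw [Finset.mem_Icc] at ha; rw [Finset.mem_range]; omega
  · intro a _; omega
  · intro a ha; rw [Finset.mem_Icc] at ha; omega
  · intro a _; rfl

lemma sum_idx_sub (k : ℕ) (hk : 0 < k) (f : ℕ → ℝ) (c : ℤ) :
    ∑ j ∈ Finset.range k, f (1 + ((c - (j : ℤ)) % (k : ℤ)).toNat)
      = ∑ i ∈ Finset.Icc 1 k, f i := by
  have hkz : (0:ℤ) < k := by exact_mod_cast hk
  rw [← sum_range_shift k f]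
  refine Finset.sum_nbij' (s := Finset.range k) (t := Finset.range k)
    (f := fun j => f (1 + ((c - (j:ℤ)) % (k:ℤ)).toNat)) (g := fun m => f (1 + m))
    (i := fun j => ((c - (j:ℤ)) % (k:ℤ)).toNat)
    (j := fun m => ((c - (m:ℤ)) % (k:ℤ)).toNat) ?_ ?_ ?_ ?_ ?_
  · intro a _
    have h1 := Int.emod_lt_of_pos (c - (a:ℤ)) hkz
    have h2 := Int.emod_nonneg (c - (a:ℤ)) hkz.ne'
    rw [Finset.mem_range]; beta_reduce; omega
  · intro a _
    have h1 := Int.emod_lt_of_pos (c - (a:ℤ)) hkz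
    have h2 := Int.emod_nonneg (c - (a:ℤ)) hkz.ne'
    rw [Finset.mem_range]; beta_reduce; omega
  · intro a ha
    rw [Finset.mem_range] at ha
    beta_reduce
    have h2 := Int.emod_nonneg (c - (a:ℤ)) hkz.ne'
    rw [Int.toNat_of_nonneg h2]
    have := emod_sub_inv k c a hkz (by positivity) (by exact_mod_cast ha)
    rw [this]; omega
  · intro a ha
    rw [Finset.mem_range] at ha
    beta_reduce
    have h2 := Int.emod_nonneg (c - (a:ℤ)) hkz.ne'
    rw [Int.toNat_of_nonneg h2]
    have := emod_sub_inv k c a hkz (by positivity) (by exact_mod_cast ha)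
    rw [this]; omega
  · intro a _; rfl

lemma sum_idx_sub' (k : ℕ) (hk : 0 < k) (f : ℕ → ℝ) (c : ℤ) :
    ∑ j ∈ Finset.range k, f (1 + (((j : ℤ) - c) % (k : ℤ)).toNat)
      = ∑ i ∈ Finset.Icc 1 k, f i := by
  have hkz : (0:ℤ) < k := by exact_mod_cast hk
  rw [← sum_range_shift k f]
  refine Finset.sum_nbij' (s := Finset.range k) (t := Finset.range k)
    (f := fun j => f (1 + (((j:ℤ) - c) % (k:ℤ)).toNat)) (g := fun m => f (1 + m))
    (i := fun j => (((j:ℤ) - c) % (k:ℤ)).toNat)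
    (j := fun m => (((m:ℤ) + c) % (k:ℤ)).toNat) ?_ ?_ ?_ ?_ ?_
  · intro a _
    have h1 := Int.emod_lt_of_pos ((a:ℤ) - c) hkz
    have h2 := Int.emod_nonneg ((a:ℤ) - c) hkz.ne'
    rw [Finset.mem_range]; beta_reduce; omega
  · intro a _
    have h1 := Int.emod_lt_of_pos ((a:ℤ) + c) hkz
    have h2 := Int.emod_nonneg ((a:ℤ) + c) hkz.ne'
    rw [Finset.mem_range]; beta_reduce; omega
  · intro a ha
    rw [Finset.mem_range] at ha
    beta_reduce
    have h2 := Int.emod_nonneg ((a:ℤ) - c) hkz.ne'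
    rw [Int.toNat_of_nonneg h2]
    have := emod_add_inv k c a hkz (by positivity) (by exact_mod_cast ha)
    rw [this]; omega
  · intro a ha
    rw [Finset.mem_range] at ha
    beta_reduce
    have h2 := Int.emod_nonneg ((a:ℤ) + c) hkz.ne'
    rw [Int.toNat_of_nonneg h2]
    -- goal: (((((a:ℤ)+c) % k) - c) % k).toNat = a
    have h3 : ((a:ℤ) + c) % k = ((a:ℤ) + c) % k := rfl
    have key : ((((a:ℤ) + c) % k) - c) % k = a := by
      have : ((((a:ℤ) + c) % k) - c) % k = (((a:ℤ) + c) - c) % k := by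
        rw [Int.sub_emod, Int.emod_emod_of_dvd _ dvd_rfl, ← Int.sub_emod]
      rw [this]
      have : (a:ℤ) + c - c = a := by ring
      rw [this, Int.emod_eq_of_lt (by positivity) (by exact_mod_cast ha)]
    rw [key]; omega
  · intro a _; rfl
lemma pS_full (k : ℕ) (hk : 0 < k) (y : ℕ → ℤ) (t : ℤ)
    (hsum : ∑ i ∈ Finset.Icc 1 k, y i = t) (a : ℕ) : pS k y a k = (t : ℝ) := by
  unfold pS
  rw [Finset.sum_congr rfl (fun j _ => by rw [tileIdx_succ])]
  rw [sum_idx_sub k hk (fun i => ((y i : ℤ) : ℝ)) (a : ℤ)]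
  rw [← hsum]
  push_cast
  rfl

lemma qS_full (k : ℕ) (hk : 0 < k) (y : ℕ → ℤ) (t : ℤ)
    (hsum : ∑ i ∈ Finset.Icc 1 k, y i = t) (b : ℕ) : qS k y b k = (t : ℝ) := by
  unfold qS
  rw [Finset.sum_congr rfl (fun i _ => by rw [tileIdx_succ])]
  rw [sum_idx_sub' k hk (fun i => ((y i : ℤ) : ℝ)) (b : ℤ)]
  rw [← hsum]
  push_cast
  rfl

set_option maxHeartbeats 2000000 in
/-- Given `k ≥ 4`, `t ≥ 1` and integers `y₁,…,y_k` with `1 ≤ y_i ≤ t-1` and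
`y₁ + … + y_k = t`, with `S = k²t`, `L = k²S` and `N = kL + (2k-1)S + (2k-1)t`, there is a
family of `k² + 2k(k-1) + 1` pairwise disjoint axis-parallel open rectangles inside
`[0,N] × [0,N]` consisting of the tiles (sizes determined by `σ`), `k(k-1)` thin items,
`k(k-1)` flat items, and the bar. -/
theorem stmt_14 (k : ℕ) (t : ℤ) (hk : 4 ≤ k) (ht : 1 ≤ t) (y : ℕ → ℤ)
    (hy : ∀ i ∈ Finset.Icc 1 k, 1 ≤ y i ∧ y i ≤ t - 1)
    (hsum : ∑ i ∈ Finset.Icc 1 k, y i = t)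
    (S L N : ℝ) (hS : S = (k : ℝ) ^ 2 * (t : ℝ)) (hL : L = (k : ℝ) ^ 2 * S)
    (hN : N = (k : ℝ) * L + (2 * (k : ℝ) - 1) * S + (2 * (k : ℝ) - 1) * (t : ℝ)) :
    ∃ pos : PackIdx k → ℝ × ℝ,
      (∀ i j : PackIdx k, i ≠ j →
        (Set.Ioo (pos i).1 ((pos i).1 + packW k y t S L N i) ×ˢ
          Set.Ioo (pos i).2 ((pos i).2 + packH k y t S L i)) ∩
        (Set.Ioo (pos j).1 ((pos j).1 + packW k y t S L N j) ×ˢ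
          Set.Ioo (pos j).2 ((pos j).2 + packH k y t S L j)) = ∅) ∧
      (∀ i : PackIdx k,
        Set.Ioo (pos i).1 ((pos i).1 + packW k y t S L N i) ×ˢ
          Set.Ioo (pos i).2 ((pos i).2 + packH k y t S L i) ⊆
        Set.Icc (0 : ℝ) N ×ˢ Set.Icc (0 : ℝ) N) := by
  have hk0 : 0 < k := by omega
  have hk1 : 0 < k - 1 := by omega
  have hkR : (4 : ℝ) ≤ (k : ℝ) := by exact_mod_cast hk
  have htR : (1 : ℝ) ≤ (t : ℝ) := by exact_mod_cast ht
  have hk2 : (16 : ℝ) ≤ (k : ℝ) ^ 2 := by nlinarith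
  have hS16 : 16 * (t : ℝ) ≤ S := by rw [hS]; nlinarith
  have hL16 : 16 * S ≤ L := by rw [hL]; nlinarith
  have ht0 : (0 : ℝ) < (t : ℝ) := by linarith
  have hS0 : (0 : ℝ) < S := by linarith
  have hL0 : (0 : ℝ) < L := by linarith
  set DD : ℝ := L + 2 * S + 2 * (t : ℝ) with hDD
  set RR : ℝ := L + 2 * S with hRR
  have hDD0 : (0 : ℝ) ≤ DD := by rw [hDD]; linarith
  have hRR0 : (0 : ℝ) ≤ RR := by rw [hRR]; linarith
  have hNalt : N = ((k : ℝ) - 1) * DD + L + S + (t : ℝ) := by rw [hN, hDD]; ring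
  have hmulR : ∀ x x' X : ℝ, x ≤ x' → 0 ≤ X → x * X ≤ x' * X :=
    fun x x' X h hX => mul_le_mul_of_nonneg_right h hX
  have hkm1 : ((k - 1 : ℕ) : ℝ) = (k : ℝ) - 1 := by
    push_cast [Nat.cast_sub (by omega : 1 ≤ k)]; ring
  have hyb : ∀ a b : ℕ, (1 : ℝ) ≤ ((y (tileIdx k (a + 1) (b + 1)) : ℤ) : ℝ) ∧
      ((y (tileIdx k (a + 1) (b + 1)) : ℤ) : ℝ) ≤ (t : ℝ) - 1 := by
    intro a b
    obtain ⟨h1, h2⟩ := hy _ (tileIdx_mem k hk0 (a + 1) (b + 1))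
    constructor
    · exact_mod_cast h1
    · have : ((y (tileIdx k (a + 1) (b + 1)) : ℤ) : ℝ) ≤ ((t - 1 : ℤ) : ℝ) := by
        exact_mod_cast h2
      push_cast at this; linarith
  have hp0 : ∀ a b, 0 ≤ pS k y a b := fun a b =>
    Finset.sum_nonneg fun j _ => by linarith [(hyb a j).1]
  have hq0 : ∀ b a, 0 ≤ qS k y b a := fun b a =>
    Finset.sum_nonneg fun i _ => by linarith [(hyb i b).1]
  have hpmono : ∀ a b b', b ≤ b' → pS k y a b ≤ pS k y a b' := by
    intro a b b' h
    apply Finset.sum_le_sum_of_subset_of_nonneg (Finset.range_subset_range.2 h)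
    intro j _ _; linarith [(hyb a j).1]
  have hqmono : ∀ b a a', a ≤ a' → qS k y b a ≤ qS k y b a' := by
    intro b a a' h
    apply Finset.sum_le_sum_of_subset_of_nonneg (Finset.range_subset_range.2 h)
    intro i _ _; linarith [(hyb i b).1]
  have hpt : ∀ a b, b ≤ k → pS k y a b ≤ (t : ℝ) := fun a b h =>
    (hpmono a b k h).trans (le_of_eq (pS_full k hk0 y t hsum a))
  have hqt : ∀ b a, a ≤ k → qS k y b a ≤ (t : ℝ) := fun b a h =>
    (hqmono b a k h).trans (le_of_eq (qS_full k hk0 y t hsum b))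
  have hpstep : ∀ a b, pS k y a (b + 1) = pS k y a b + ((y (tileIdx k (a + 1) (b + 1)) : ℤ) : ℝ) :=
    fun a b => Finset.sum_range_succ _ b
  have hqstep : ∀ b a, qS k y b (a + 1) = qS k y b a + ((y (tileIdx k (a + 1) (b + 1)) : ℤ) : ℝ) :=
    fun b a => Finset.sum_range_succ _ a
  have hpub : ∀ a b, pS k y a b ≤ (b : ℝ) * ((t : ℝ) - 1) := by
    intro a b
    have := Finset.sum_le_card_nsmul (Finset.range b)
      (fun j => ((y (tileIdx k (a + 1) (j + 1)) : ℤ) : ℝ)) ((t : ℝ) - 1)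
      (fun j _ => (hyb a j).2)
    simpa [pS, Finset.card_range, nsmul_eq_mul] using this
  -- the bar bottom
  have hbarN : ((k : ℝ) * L + (2 * (k : ℝ) - 1) * S + (t : ℝ)) + (2 * (k : ℝ) - 2) * (t : ℝ) = N := by
    rw [hN]; ring
  have hmulc : ∀ (m n : ℕ) (X : ℝ), m ≤ n → 0 ≤ X → (m : ℝ) * X ≤ (n : ℝ) * X :=
    fun m n X h hX => mul_le_mul_of_nonneg_right (by exact_mod_cast h) hX
  have hkRR : (k : ℝ) * RR = (k : ℝ) * L + 2 * ((k : ℝ) * S) := by rw [hRR]; ring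
  clear_value DD RR
  refine ⟨Sum.elim
      (fun ab => ((ab.2.val : ℝ) * DD - pS k y ab.1.val ab.2.val,
        (ab.1.val : ℝ) * RR + qS k y ab.2.val ab.1.val))
      (Sum.elim
        (fun i => (((i.val % (k - 1) : ℕ) : ℝ) * DD + (L + S + 2 * (t : ℝ))
            - pS k y (i.val / (k - 1)) (i.val % (k - 1) + 1),
          ((i.val / (k - 1) : ℕ) : ℝ) * RR))
        (Sum.elim
          (fun i => (((i.val / (k - 1) : ℕ) : ℝ) * DD,
            ((i.val % (k - 1) : ℕ) : ℝ) * RR + (L + S) + qS k y (i.val / (k - 1)) (i.val % (k - 1) + 1)))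
          (fun _ => (0, (k : ℝ) * L + (2 * (k : ℝ) - 1) * S + (t : ℝ))))), ?_, ?_⟩
  · -- disjointness
    -- canonical lemmas
    have Ctt : ∀ a b a' b' : ℕ, a < k → b < k → a' < k → b' < k → ¬(a = a' ∧ b = b') →
        (Set.Ioo ((b : ℝ) * DD - pS k y a b)
            ((b : ℝ) * DD - pS k y a b + (L + S + 2 * (t : ℝ) - ((y (tileIdx k (a + 1) (b + 1)) : ℤ) : ℝ))) ×ˢ
          Set.Ioo ((a : ℝ) * RR + qS k y b a)
            ((a : ℝ) * RR + qS k y b a + (L + S + ((y (tileIdx k (a + 1) (b + 1)) : ℤ) : ℝ)))) ∩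
        (Set.Ioo ((b' : ℝ) * DD - pS k y a' b')
            ((b' : ℝ) * DD - pS k y a' b' + (L + S + 2 * (t : ℝ) - ((y (tileIdx k (a' + 1) (b' + 1)) : ℤ) : ℝ))) ×ˢ
          Set.Ioo ((a' : ℝ) * RR + qS k y b' a')
            ((a' : ℝ) * RR + qS k y b' a' + (L + S + ((y (tileIdx k (a' + 1) (b' + 1)) : ℤ) : ℝ)))) = ∅ := by
      intro a b a' b' ha hb ha' hb' hne
      apply box_disj
      rcases Nat.lt_trichotomy b b' with h | h | h
      · left
        have h1 := hpstep a b
        have h4 := hmulc (b + 1) b' DD h hDD0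
        push_cast at h4
        linarith [hpt a' b' hb'.le, hp0 a (b + 1)]
      · subst h
        have hane : a ≠ a' := by tauto
        rcases Nat.lt_trichotomy a a' with h | h | h
        · right; right; left
          have h1 := hqstep b a
          have h4 := hmulc (a + 1) a' RR h hRR0
          push_cast at h4
          linarith [hqmono b (a + 1) a' h]
        · exact absurd h hane
        · right; right; right
          have h1 := hqstep b a'
          have h4 := hmulc (a' + 1) a RR h hRR0
          push_cast at h4
          linarith [hqmono b (a' + 1) a h]
      · right; left
        have h1 := hpstep a' b'
        have h4 := hmulc (b' + 1) b DD h hDD0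
        push_cast at h4
        linarith [hpt a b hb.le, hp0 a' (b' + 1)]
    have Ctn : ∀ a b a' g : ℕ, a < k → b < k → a' < k → g < k - 1 →
        (Set.Ioo ((b : ℝ) * DD - pS k y a b)
            ((b : ℝ) * DD - pS k y a b + (L + S + 2 * (t : ℝ) - ((y (tileIdx k (a + 1) (b + 1)) : ℤ) : ℝ))) ×ˢ
          Set.Ioo ((a : ℝ) * RR + qS k y b a)
            ((a : ℝ) * RR + qS k y b a + (L + S + ((y (tileIdx k (a + 1) (b + 1)) : ℤ) : ℝ)))) ∩
        (Set.Ioo ((g : ℝ) * DD + (L + S + 2 * (t : ℝ)) - pS k y a' (g + 1))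
            ((g : ℝ) * DD + (L + S + 2 * (t : ℝ)) - pS k y a' (g + 1) + S) ×ˢ
          Set.Ioo ((a' : ℝ) * RR) ((a' : ℝ) * RR + L)) = ∅ := by
      intro a b a' g ha hb ha' hg
      apply box_disj
      rcases Nat.lt_trichotomy a a' with h | h | h
      · right; right; left
        have h1 := hqstep b a
        have h4 := hmulc (a + 1) a' RR h hRR0
        push_cast at h4
        linarith [hqt b (a + 1) (by omega)]
      · subst h
        rcases Nat.lt_trichotomy b g with hbg | hbg | hbg
        · left
          have h1 := hpstep a b
          have h4 := hmulc (b + 1) g DD hbg hDD0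
          push_cast at h4
          linarith [hpt a (g + 1) (by omega), hp0 a (b + 1)]
        · subst hbg
          left
          linarith [hpstep a b]
        · right; left
          rcases Nat.eq_or_lt_of_le hbg with heq | hlt
          · rw [← heq]
            push_cast
            linarith [hpstep a g]
          · have h4 := hmulc (g + 2) b DD (by omega) hDD0
            push_cast at h4
            linarith [hpt a b hb.le, hp0 a (g + 1)]
      · right; right; right
        have h4 := hmulc (a' + 1) a RR h hRR0
        push_cast at h4
        linarith [hq0 b a]
    have Ctf : ∀ a b a' b' : ℕ, a < k → b < k → a' < k - 1 → b' < k →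
        (Set.Ioo ((b : ℝ) * DD - pS k y a b)
            ((b : ℝ) * DD - pS k y a b + (L + S + 2 * (t : ℝ) - ((y (tileIdx k (a + 1) (b + 1)) : ℤ) : ℝ))) ×ˢ
          Set.Ioo ((a : ℝ) * RR + qS k y b a)
            ((a : ℝ) * RR + qS k y b a + (L + S + ((y (tileIdx k (a + 1) (b + 1)) : ℤ) : ℝ)))) ∩
        (Set.Ioo ((b' : ℝ) * DD) ((b' : ℝ) * DD + L) ×ˢ
          Set.Ioo ((a' : ℝ) * RR + (L + S) + qS k y b' (a' + 1))
            ((a' : ℝ) * RR + (L + S) + qS k y b' (a' + 1) + S)) = ∅ := by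
      intro a b a' b' ha hb ha' hb'
      apply box_disj
      rcases Nat.lt_trichotomy b b' with h | h | h
      · left
        have h1 := hpstep a b
        have h4 := hmulc (b + 1) b' DD h hDD0
        push_cast at h4
        linarith [hp0 a (b + 1)]
      · subst h
        rcases Nat.lt_or_ge a' a with h | h
        · right; right; right
          have h4 := hmulc (a' + 1) a RR h hRR0
          push_cast at h4
          linarith [hqmono b (a' + 1) a h]
        · right; right; left
          have h1 := hqstep b a
          have h4 := hmulc a a' RR h hRR0
          linarith [hqmono b (a + 1) (a' + 1) (by omega)]
      · right; left
        have h4 := hmulc (b' + 1) b DD h hDD0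
        push_cast at h4
        linarith [hpt a b hb.le]
    have Ctb : ∀ a b : ℕ, a < k → b < k →
        (Set.Ioo ((b : ℝ) * DD - pS k y a b)
            ((b : ℝ) * DD - pS k y a b + (L + S + 2 * (t : ℝ) - ((y (tileIdx k (a + 1) (b + 1)) : ℤ) : ℝ))) ×ˢ
          Set.Ioo ((a : ℝ) * RR + qS k y b a)
            ((a : ℝ) * RR + qS k y b a + (L + S + ((y (tileIdx k (a + 1) (b + 1)) : ℤ) : ℝ)))) ∩
        (Set.Ioo (0 : ℝ) (0 + N) ×ˢ
          Set.Ioo ((k : ℝ) * L + (2 * (k : ℝ) - 1) * S + (t : ℝ))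
            ((k : ℝ) * L + (2 * (k : ℝ) - 1) * S + (t : ℝ) + (2 * (k : ℝ) - 2) * (t : ℝ))) = ∅ := by
      intro a b ha hb
      apply box_disj
      right; right; left
      have h1 := hqstep b a
      have h4 := hmulc (a + 1) k RR (by omega) hRR0
      push_cast at h4
      linarith [hqt b (a + 1) (by omega), hkRR]
    have Cnn : ∀ a g a' g' : ℕ, a < k → g < k - 1 → a' < k → g' < k - 1 → ¬(a = a' ∧ g = g') →
        (Set.Ioo ((g : ℝ) * DD + (L + S + 2 * (t : ℝ)) - pS k y a (g + 1))
            ((g : ℝ) * DD + (L + S + 2 * (t : ℝ)) - pS k y a (g + 1) + S) ×ˢ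
          Set.Ioo ((a : ℝ) * RR) ((a : ℝ) * RR + L)) ∩
        (Set.Ioo ((g' : ℝ) * DD + (L + S + 2 * (t : ℝ)) - pS k y a' (g' + 1))
            ((g' : ℝ) * DD + (L + S + 2 * (t : ℝ)) - pS k y a' (g' + 1) + S) ×ˢ
          Set.Ioo ((a' : ℝ) * RR) ((a' : ℝ) * RR + L)) = ∅ := by
      intro a g a' g' ha hg ha' hg' hne
      apply box_disj
      rcases Nat.lt_trichotomy a a' with h | h | h
      · right; right; left
        have h4 := hmulc (a + 1) a' RR h hRR0
        push_cast at h4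
        linarith
      · subst h
        have hgne : g ≠ g' := by tauto
        rcases Nat.lt_trichotomy g g' with h | h | h
        · left
          have h4 := hmulc (g + 1) g' DD h hDD0
          push_cast at h4
          linarith [hpt a (g' + 1) (by omega), hp0 a (g + 1)]
        · exact absurd h hgne
        · right; left
          have h4 := hmulc (g' + 1) g DD h hDD0
          push_cast at h4
          linarith [hpt a (g + 1) (by omega), hp0 a (g' + 1)]
      · right; right; right
        have h4 := hmulc (a' + 1) a RR h hRR0
        push_cast at h4
        linarith
    have Cnf : ∀ a g a' b' : ℕ, a < k → g < k - 1 → a' < k - 1 → b' < k →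
        (Set.Ioo ((g : ℝ) * DD + (L + S + 2 * (t : ℝ)) - pS k y a (g + 1))
            ((g : ℝ) * DD + (L + S + 2 * (t : ℝ)) - pS k y a (g + 1) + S) ×ˢ
          Set.Ioo ((a : ℝ) * RR) ((a : ℝ) * RR + L)) ∩
        (Set.Ioo ((b' : ℝ) * DD) ((b' : ℝ) * DD + L) ×ˢ
          Set.Ioo ((a' : ℝ) * RR + (L + S) + qS k y b' (a' + 1))
            ((a' : ℝ) * RR + (L + S) + qS k y b' (a' + 1) + S)) = ∅ := by
      intro a g a' b' ha hg ha' hb'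
      apply box_disj
      rcases Nat.lt_or_ge g b' with h | h
      · left
        have h4 := hmulc (g + 1) b' DD h hDD0
        push_cast at h4
        linarith [hp0 a (g + 1)]
      · right; left
        have h4 := hmulc b' g DD h hDD0
        linarith [hpt a (g + 1) (by omega)]
    have Cnb : ∀ a g : ℕ, a < k → g < k - 1 →
        (Set.Ioo ((g : ℝ) * DD + (L + S + 2 * (t : ℝ)) - pS k y a (g + 1))
            ((g : ℝ) * DD + (L + S + 2 * (t : ℝ)) - pS k y a (g + 1) + S) ×ˢ
          Set.Ioo ((a : ℝ) * RR) ((a : ℝ) * RR + L)) ∩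
        (Set.Ioo (0 : ℝ) (0 + N) ×ˢ
          Set.Ioo ((k : ℝ) * L + (2 * (k : ℝ) - 1) * S + (t : ℝ))
            ((k : ℝ) * L + (2 * (k : ℝ) - 1) * S + (t : ℝ) + (2 * (k : ℝ) - 2) * (t : ℝ))) = ∅ := by
      intro a g ha hg
      apply box_disj
      right; right; left
      have h4 := hmulc (a + 1) k RR (by omega) hRR0
      push_cast at h4
      linarith [hkRR]
    have Cff : ∀ a b a' b' : ℕ, a < k - 1 → b < k → a' < k - 1 → b' < k → ¬(a = a' ∧ b = b') →
        (Set.Ioo ((b : ℝ) * DD) ((b : ℝ) * DD + L) ×ˢ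
          Set.Ioo ((a : ℝ) * RR + (L + S) + qS k y b (a + 1))
            ((a : ℝ) * RR + (L + S) + qS k y b (a + 1) + S)) ∩
        (Set.Ioo ((b' : ℝ) * DD) ((b' : ℝ) * DD + L) ×ˢ
          Set.Ioo ((a' : ℝ) * RR + (L + S) + qS k y b' (a' + 1))
            ((a' : ℝ) * RR + (L + S) + qS k y b' (a' + 1) + S)) = ∅ := by
      intro a b a' b' ha hb ha' hb' hne
      apply box_disj
      rcases Nat.lt_trichotomy b b' with h | h | h
      · left
        have h4 := hmulc (b + 1) b' DD h hDD0
        push_cast at h4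
        linarith
      · subst h
        have hane : a ≠ a' := by tauto
        rcases Nat.lt_trichotomy a a' with h | h | h
        · right; right; left
          have h4 := hmulc (a + 1) a' RR h hRR0
          push_cast at h4
          linarith [hqmono b (a + 1) (a' + 1) (by omega)]
        · exact absurd h hane
        · right; right; right
          have h4 := hmulc (a' + 1) a RR h hRR0
          push_cast at h4
          linarith [hqmono b (a' + 1) (a + 1) (by omega)]
      · right; left
        have h4 := hmulc (b' + 1) b DD h hDD0
        push_cast at h4
        linarith
    have Cfb : ∀ a b : ℕ, a < k - 1 → b < k →
        (Set.Ioo ((b : ℝ) * DD) ((b : ℝ) * DD + L) ×ˢ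
          Set.Ioo ((a : ℝ) * RR + (L + S) + qS k y b (a + 1))
            ((a : ℝ) * RR + (L + S) + qS k y b (a + 1) + S)) ∩
        (Set.Ioo (0 : ℝ) (0 + N) ×ˢ
          Set.Ioo ((k : ℝ) * L + (2 * (k : ℝ) - 1) * S + (t : ℝ))
            ((k : ℝ) * L + (2 * (k : ℝ) - 1) * S + (t : ℝ) + (2 * (k : ℝ) - 2) * (t : ℝ))) = ∅ := by
      intro a b ha hb
      apply box_disj
      right; right; left
      have h4 := hmulc (a + 2) k RR (by omega) hRR0
      push_cast at h4
      linarith [hqt b (a + 1) (by omega), hkRR]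
    intro i j hij
    have hdm : ∀ m : Fin (k * (k - 1)), m.val / (k - 1) < k := by
      intro m
      exact (Nat.div_lt_iff_lt_mul hk1).2 (by have := m.isLt; omega)
    have hmm : ∀ m : Fin (k * (k - 1)), m.val % (k - 1) < k - 1 := fun m => Nat.mod_lt _ hk1
    rcases i with ab | ti | fi | u <;> rcases j with ab' | ti' | fi' | u' <;>
      simp only [packW, packH, Sum.elim_inl, Sum.elim_inr, ne_eq] at hij ⊢
    · -- tile tile
      refine Ctt ab.1 ab.2 ab'.1 ab'.2 ab.1.isLt ab.2.isLt ab'.1.isLt ab'.2.isLt ?_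
      rintro ⟨h1, h2⟩
      apply hij
      have : ab = ab' := Prod.ext (Fin.ext h1) (Fin.ext h2)
      rw [this]
    · exact Ctn ab.1 ab.2 (ti'.val / (k - 1)) (ti'.val % (k - 1)) ab.1.isLt ab.2.isLt (hdm ti') (hmm ti')
    · exact Ctf ab.1 ab.2 (fi'.val % (k - 1)) (fi'.val / (k - 1)) ab.1.isLt ab.2.isLt (hmm fi') (hdm fi')
    · exact Ctb ab.1 ab.2 ab.1.isLt ab.2.isLt
    · rw [Set.inter_comm]
      exact Ctn ab'.1 ab'.2 (ti.val / (k - 1)) (ti.val % (k - 1)) ab'.1.isLt ab'.2.isLt (hdm ti) (hmm ti)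
    · refine Cnn (ti.val / (k - 1)) (ti.val % (k - 1)) (ti'.val / (k - 1)) (ti'.val % (k - 1))
        (hdm ti) (hmm ti) (hdm ti') (hmm ti') ?_
      rintro ⟨h1, h2⟩
      apply hij
      have e1 := Nat.div_add_mod ti.val (k - 1)
      have e2 := Nat.div_add_mod ti'.val (k - 1)
      rw [← h1, ← h2] at e2
      have : ti = ti' := Fin.ext (by omega)
      rw [this]
    · exact Cnf (ti.val / (k - 1)) (ti.val % (k - 1)) (fi'.val % (k - 1)) (fi'.val / (k - 1))
        (hdm ti) (hmm ti) (hmm fi') (hdm fi')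
    · exact Cnb (ti.val / (k - 1)) (ti.val % (k - 1)) (hdm ti) (hmm ti)
    · rw [Set.inter_comm]
      exact Ctf ab'.1 ab'.2 (fi.val % (k - 1)) (fi.val / (k - 1)) ab'.1.isLt ab'.2.isLt (hmm fi) (hdm fi)
    · rw [Set.inter_comm]
      exact Cnf (ti'.val / (k - 1)) (ti'.val % (k - 1)) (fi.val % (k - 1)) (fi.val / (k - 1))
        (hdm ti') (hmm ti') (hmm fi) (hdm fi)
    · refine Cff (fi.val % (k - 1)) (fi.val / (k - 1)) (fi'.val % (k - 1)) (fi'.val / (k - 1))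
        (hmm fi) (hdm fi) (hmm fi') (hdm fi') ?_
      rintro ⟨h1, h2⟩
      apply hij
      have e1 := Nat.div_add_mod fi.val (k - 1)
      have e2 := Nat.div_add_mod fi'.val (k - 1)
      rw [← h2, ← h1] at e2
      have : fi = fi' := Fin.ext (by omega)
      rw [this]
    · exact Cfb (fi.val % (k - 1)) (fi.val / (k - 1)) (hmm fi) (hdm fi)
    · rw [Set.inter_comm]; exact Ctb ab'.1 ab'.2 ab'.1.isLt ab'.2.isLt
    · rw [Set.inter_comm]; exact Cnb (ti'.val / (k - 1)) (ti'.val % (k - 1)) (hdm ti') (hmm ti')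
    · rw [Set.inter_comm]; exact Cfb (fi'.val % (k - 1)) (fi'.val / (k - 1)) (hmm fi') (hdm fi')
    · exact absurd (by cases u; cases u'; rfl) hij
  · -- containment
    intro i
    have hdm : ∀ m : Fin (k * (k - 1)), m.val / (k - 1) < k := by
      intro m
      exact (Nat.div_lt_iff_lt_mul hk1).2 (by have := m.isLt; omega)
    have hmm : ∀ m : Fin (k * (k - 1)), m.val % (k - 1) < k - 1 := fun m => Nat.mod_lt _ hk1
    rcases i with ab | ti | fi | u <;>
      simp only [packW, packH, Sum.elim_inl, Sum.elim_inr] <;>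
      refine Set.prod_mono (box_sub ?_ ?_) (box_sub ?_ ?_)
    · -- tile x low
      have h4 := mul_le_mul_of_nonneg_left (show (t : ℝ) - 1 ≤ DD by linarith)
        (show (0 : ℝ) ≤ (ab.2.val : ℝ) by positivity)
      linarith [hpub ab.1.val ab.2.val]
    · -- tile x high
      by_cases hbk : ab.2.val + 1 = k
      · have h2 : pS k y ab.1.val (ab.2.val + 1) = (t : ℝ) := by
          rw [hbk]; exact pS_full k hk0 y t hsum ab.1.val
        have h3 : ((ab.2.val : ℕ) : ℝ) + 1 = (k : ℝ) := by exact_mod_cast hbk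
        have h4 : ((ab.2.val : ℕ) : ℝ) * DD = ((k : ℝ) - 1) * DD := by
          rw [show ((ab.2.val : ℕ) : ℝ) = (k : ℝ) - 1 by linarith]
        linarith [hpstep ab.1.val ab.2.val, hNalt]
      · have hc : ((ab.2.val + 2 : ℕ) : ℝ) ≤ (k : ℝ) := by
          exact_mod_cast (show ab.2.val + 2 ≤ k by have := ab.2.isLt; omega)
        push_cast at hc
        have h4 := hmulR ((ab.2.val : ℝ) + 1) ((k : ℝ) - 1) DD (by linarith) hDD0
        linarith [hpstep ab.1.val ab.2.val, hp0 ab.1.val (ab.2.val + 1), hNalt]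
    · -- tile y low
      have h4 := mul_nonneg (show (0 : ℝ) ≤ (ab.1.val : ℝ) by positivity) hRR0
      linarith [hq0 ab.2.val ab.1.val]
    · -- tile y high
      have hc : ((ab.1.val + 1 : ℕ) : ℝ) ≤ (k : ℝ) := by
        exact_mod_cast (show ab.1.val + 1 ≤ k from ab.1.isLt)
      push_cast at hc
      have h4 := hmulR (ab.1.val : ℝ) ((k : ℝ) - 1) RR (by linarith) hRR0
      have h5 : 0 ≤ (2 * (k : ℝ) - 2) * (t : ℝ) := mul_nonneg (by linarith) (by linarith)
      linarith [hqstep ab.2.val ab.1.val, hqt ab.2.val (ab.1.val + 1) ab.1.isLt, hkRR, hbarN]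
    · -- thin x low
      have h4 := mul_nonneg (show (0 : ℝ) ≤ ((ti.val % (k - 1) : ℕ) : ℝ) by positivity) hDD0
      have hP := hpt (ti.val / (k - 1)) (ti.val % (k - 1) + 1) (by have := hmm ti; omega)
      linarith
    · -- thin x high
      have hc : ((ti.val % (k - 1) + 2 : ℕ) : ℝ) ≤ (k : ℝ) := by
        exact_mod_cast (show ti.val % (k - 1) + 2 ≤ k by have := hmm ti; omega)
      push_cast at hc
      have h4 := hmulR (((ti.val % (k - 1) : ℕ) : ℝ) + 1) ((k : ℝ) - 1) DD (by linarith) hDD0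
      linarith [hp0 (ti.val / (k - 1)) (ti.val % (k - 1) + 1), hNalt]
    · -- thin y low
      exact mul_nonneg (show (0 : ℝ) ≤ ((ti.val / (k - 1) : ℕ) : ℝ) by positivity) hRR0
    · -- thin y high
      have hc : ((ti.val / (k - 1) + 1 : ℕ) : ℝ) ≤ (k : ℝ) := by
        exact_mod_cast (show ti.val / (k - 1) + 1 ≤ k from hdm ti)
      push_cast at hc
      have h4 := hmulR (((ti.val / (k - 1) : ℕ) : ℝ)) ((k : ℝ) - 1) RR (by linarith) hRR0
      have h5 := mul_le_mul_of_nonneg_left (show RR ≤ DD by linarith)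
        (show (0 : ℝ) ≤ (k : ℝ) - 1 by linarith)
      linarith [hNalt]
    · -- flat x low
      exact mul_nonneg (show (0 : ℝ) ≤ ((fi.val / (k - 1) : ℕ) : ℝ) by positivity) hDD0
    · -- flat x high
      have hc : ((fi.val / (k - 1) + 1 : ℕ) : ℝ) ≤ (k : ℝ) := by
        exact_mod_cast (show fi.val / (k - 1) + 1 ≤ k from hdm fi)
      push_cast at hc
      have h4 := hmulR (((fi.val / (k - 1) : ℕ) : ℝ)) ((k : ℝ) - 1) DD (by linarith) hDD0
      linarith [hNalt]
    · -- flat y low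
      have h4 := mul_nonneg (show (0 : ℝ) ≤ ((fi.val % (k - 1) : ℕ) : ℝ) by positivity) hRR0
      linarith [hq0 (fi.val / (k - 1)) (fi.val % (k - 1) + 1)]
    · -- flat y high
      have hc : ((fi.val % (k - 1) + 2 : ℕ) : ℝ) ≤ (k : ℝ) := by
        exact_mod_cast (show fi.val % (k - 1) + 2 ≤ k by have := hmm fi; omega)
      push_cast at hc
      have h4 := hmulR (((fi.val % (k - 1) : ℕ) : ℝ)) ((k : ℝ) - 2) RR (by linarith) hRR0
      have h5 := mul_le_mul_of_nonneg_left (show RR ≤ DD by linarith)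
        (show (0 : ℝ) ≤ (k : ℝ) - 2 by linarith)
      have h6 := hmulR ((k : ℝ) - 2) ((k : ℝ) - 1) DD (by linarith) hDD0
      linarith [hqt (fi.val / (k - 1)) (fi.val % (k - 1) + 1) (by have := hmm fi; omega), hNalt]
    · -- bar x low
      exact le_refl 0
    · -- bar x high
      linarith
    · -- bar y low
      have h1 := mul_nonneg (show (0 : ℝ) ≤ (k : ℝ) by linarith) hL0.le
      have h2 := mul_nonneg (show (0 : ℝ) ≤ 2 * (k : ℝ) - 1 by linarith) hS0.le
      linarith
    · -- bar y high
      linarith [hbarN]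
end
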